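/- In the 2+4 product model on ℝ⁶ with μ = 0, λ = 1 (flat T² times unit S⁴), the invariant L₂ = −(198/25). In particular L₂ < 0. -/

import Mathlib

/-!
With `g`, `h` the two factor metrics, viewed as complementary orthogonal projections, every
2-tensor of the computation lies in `span {g, h}` and every 4-tensor in
`span {g∧g, g∧h, h∧h}`. As operators on bivectors, `g∧g` and `h∧h` are twice the projections
onto `Λ²` of the two factors and `g∧h` is the projection onto the mixed bivectors, so `∘`
multiplies coefficients as `(a, b, c)(a', b', c') = (2aa', bb', 2cc')`; this follows from
`(A∧B)∘(C∧D) = AC∧BD + AD∧BC`. For the flat `T²` times the unit `S⁴` one finds `J = 6/5`,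
`E = -g/2 + h/4`, `W = (3/10) g∧g - (3/20) g∧h + (1/20) h∧h` and `tr W² = (9/20) g + (3/40) h`,
whence `L₂ = 16 · (-3/8) - (4/3) · (6/5) · (6/5) = -198/25`.
-/

open Finset

/-- Kulkarni–Nomizu product of two 2-tensors: (S∧T)_{ijkl}. -/
def KN {n : ℕ} (S T : Fin n → Fin n → ℝ) : Fin n → Fin n → Fin n → Fin n → ℝ :=
  fun i j k l => S i k * T j l + S j l * T i k - S i l * T j k - S j k * T i l

/-- Composition of 2-tensors (as endomorphisms, indices raised by the standard metric). -/
noncomputable def comp2 {n : ℕ} (S T : Fin n → Fin n → ℝ) : Fin n → Fin n → ℝ :=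
  fun i j => ∑ u, S i u * T u j

/-- Composition of curvature-type 4-tensors: (A∘B)_{ijkl} = (1/2) A_{ij}^{uv} B_{uvkl}. -/
noncomputable def comp4 {n : ℕ} (A B : Fin n → Fin n → Fin n → Fin n → ℝ) :
    Fin n → Fin n → Fin n → Fin n → ℝ :=
  fun i j k l => (1 / 2 : ℝ) * ∑ u, ∑ v, A i j u v * B u v k l

/-- Partial (Ricci-type) trace of a 4-tensor: (tr A)_{ij} = A_{iuj}^{u}. -/
noncomputable def ptr {n : ℕ} (A : Fin n → Fin n → Fin n → Fin n → ℝ) :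
    Fin n → Fin n → ℝ :=
  fun i j => ∑ u, A i u j u

/-- Full trace of a 2-tensor. -/
noncomputable def tr2 {n : ℕ} (S : Fin n → Fin n → ℝ) : ℝ := ∑ i, S i i

/-- Inner product of 2-tensors (standard metric). -/
noncomputable def inner2 {n : ℕ} (S T : Fin n → Fin n → ℝ) : ℝ := ∑ i, ∑ j, S i j * T i j

/-- The first-factor metric on ℝ^m ⊕ ℝ^{6-m} ≅ ℝ⁶, extended by zero. -/
def g6 (m : ℕ) : Fin 6 → Fin 6 → ℝ := fun i j => if i = j ∧ (i : ℕ) < m then 1 else 0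

/-- The second-factor metric on ℝ^m ⊕ ℝ^{6-m} ≅ ℝ⁶, extended by zero. -/
def h6 (m : ℕ) : Fin 6 → Fin 6 → ℝ := fun i j => if i = j ∧ m ≤ (i : ℕ) then 1 else 0

/-- The standard inner product ḡ on ℝ⁶. -/
def gb6 : Fin 6 → Fin 6 → ℝ := fun i j => if i = j then 1 else 0

/-- Curvature model of a product of spaceforms of dimensions m and 6−m with
sectional curvatures μ and ν: R = (μ/2) g∧g + (ν/2) h∧h. -/
noncomputable def Rm (m : ℕ) (μ ν : ℝ) : Fin 6 → Fin 6 → Fin 6 → Fin 6 → ℝ :=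
  fun i j k l => (μ / 2) * KN (g6 m) (g6 m) i j k l + (ν / 2) * KN (h6 m) (h6 m) i j k l

/-- J = tr_ḡ(Ric)/10 in dimension six. -/
noncomputable def Jm (m : ℕ) (μ ν : ℝ) : ℝ := tr2 (ptr (Rm m μ ν)) / 10

/-- Schouten tensor P = (Ric − Jḡ)/4 in dimension six. -/
noncomputable def Pm (m : ℕ) (μ ν : ℝ) : Fin 6 → Fin 6 → ℝ :=
  fun i j => (ptr (Rm m μ ν) i j - Jm m μ ν * gb6 i j) / 4

/-- Trace-free Schouten tensor E = P − (J/6)ḡ. -/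
noncomputable def Em (m : ℕ) (μ ν : ℝ) : Fin 6 → Fin 6 → ℝ :=
  fun i j => Pm m μ ν i j - (Jm m μ ν / 6) * gb6 i j

/-- Weyl tensor W = R − P∧ḡ. -/
noncomputable def Wm (m : ℕ) (μ ν : ℝ) : Fin 6 → Fin 6 → Fin 6 → Fin 6 → ℝ :=
  fun i j k l => Rm m μ ν i j k l - KN (Pm m μ ν) gb6 i j k l

/-- W² = W∘W. -/
noncomputable def W2m (m : ℕ) (μ ν : ℝ) := comp4 (Wm m μ ν) (Wm m μ ν)

/-- W³ = W∘W∘W. -/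
noncomputable def W3m (m : ℕ) (μ ν : ℝ) := comp4 (Wm m μ ν) (W2m m μ ν)

/-- Q = −(40/9)J³ + 16J|E|² − 16 tr E³ − 8 W_{ijkl}E^{ik}E^{jl}. -/
noncomputable def Qm (m : ℕ) (μ ν : ℝ) : ℝ :=
  -(40 / 9) * (Jm m μ ν) ^ 3 + 16 * Jm m μ ν * inner2 (Em m μ ν) (Em m μ ν)
    - 16 * tr2 (comp2 (Em m μ ν) (comp2 (Em m μ ν) (Em m μ ν)))
    - 8 * ∑ i, ∑ j, ∑ k, ∑ l, Wm m μ ν i j k l * Em m μ ν i k * Em m μ ν j l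

/-- L₁ = 96⟨E, tr W²⟩. -/
noncomputable def L1m (m : ℕ) (μ ν : ℝ) : ℝ := 96 * inner2 (Em m μ ν) (ptr (W2m m μ ν))

/-- L₂ = 16⟨E, tr W²⟩ − (4/3) J tr² W². -/
noncomputable def L2m (m : ℕ) (μ ν : ℝ) : ℝ :=
  16 * inner2 (Em m μ ν) (ptr (W2m m μ ν)) - (4 / 3) * Jm m μ ν * tr2 (ptr (W2m m μ ν))

/-- L₃ = 4 tr² W³. -/
noncomputable def L3m (m : ℕ) (μ ν : ℝ) : ℝ := 4 * tr2 (ptr (W3m m μ ν))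

section BlockAlgebra

variable {n : ℕ}

lemma comp2_add_left (S T U : Fin n → Fin n → ℝ) : comp2 (S + T) U = comp2 S U + comp2 T U := by
  funext i j; simp only [comp2, Pi.add_apply, add_mul, Finset.sum_add_distrib]

lemma comp2_add_right (S T U : Fin n → Fin n → ℝ) : comp2 S (T + U) = comp2 S T + comp2 S U := by
  funext i j; simp only [comp2, Pi.add_apply, mul_add, Finset.sum_add_distrib]

lemma comp2_smul_left (c : ℝ) (S T : Fin n → Fin n → ℝ) : comp2 (c • S) T = c • comp2 S T := by
  funext i j; simp only [comp2, Pi.smul_apply, smul_eq_mul, Finset.mul_sum, mul_assoc]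

lemma comp2_smul_right (c : ℝ) (S T : Fin n → Fin n → ℝ) : comp2 S (c • T) = c • comp2 S T := by
  funext i j; simp only [comp2, Pi.smul_apply, smul_eq_mul, Finset.mul_sum, mul_left_comm]

lemma comp4_add_left (A B C : Fin n → Fin n → Fin n → Fin n → ℝ) :
    comp4 (A + B) C = comp4 A C + comp4 B C := by
  funext i j k l; simp only [comp4, Pi.add_apply, add_mul, Finset.sum_add_distrib, mul_add]

lemma comp4_add_right (A B C : Fin n → Fin n → Fin n → Fin n → ℝ) :
    comp4 A (B + C) = comp4 A B + comp4 A C := by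
  funext i j k l; simp only [comp4, Pi.add_apply, mul_add, Finset.sum_add_distrib]

lemma comp4_smul_left (c : ℝ) (A B : Fin n → Fin n → Fin n → Fin n → ℝ) :
    comp4 (c • A) B = c • comp4 A B := by
  funext i j k l
  simp only [comp4, Pi.smul_apply, smul_eq_mul, Finset.mul_sum, mul_assoc, mul_left_comm]

lemma comp4_smul_right (c : ℝ) (A B : Fin n → Fin n → Fin n → Fin n → ℝ) :
    comp4 A (c • B) = c • comp4 A B := by
  funext i j k l; simp only [comp4, Pi.smul_apply, smul_eq_mul, Finset.mul_sum, mul_left_comm]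

lemma ptr_add (A B : Fin n → Fin n → Fin n → Fin n → ℝ) : ptr (A + B) = ptr A + ptr B := by
  funext i j; simp only [ptr, Pi.add_apply, Finset.sum_add_distrib]

lemma ptr_smul (c : ℝ) (A : Fin n → Fin n → Fin n → Fin n → ℝ) : ptr (c • A) = c • ptr A := by
  funext i j; simp only [ptr, Pi.smul_apply, smul_eq_mul, Finset.mul_sum]

lemma tr2_add (S T : Fin n → Fin n → ℝ) : tr2 (S + T) = tr2 S + tr2 T := by
  simp only [tr2, Pi.add_apply, Finset.sum_add_distrib]

lemma tr2_smul (c : ℝ) (S : Fin n → Fin n → ℝ) : tr2 (c • S) = c * tr2 S := by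
  simp only [tr2, Pi.smul_apply, smul_eq_mul, Finset.mul_sum]

lemma inner2_eq_tr2_comp2 {S T : Fin n → Fin n → ℝ} (hT : ∀ i j, T i j = T j i) :
    inner2 S T = tr2 (comp2 S T) := by
  simp only [inner2, tr2, comp2, hT]

lemma KN_comm (S T : Fin n → Fin n → ℝ) : KN S T = KN T S := by
  funext i j k l; simp only [KN]; ring

lemma KN_zero_left (T : Fin n → Fin n → ℝ) : KN 0 T = 0 := by
  funext i j k l; simp only [KN, Pi.zero_apply]; ring

lemma KN_zero_right (S : Fin n → Fin n → ℝ) : KN S 0 = 0 := by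
  rw [KN_comm, KN_zero_left]

lemma ptr_KN (S T : Fin n → Fin n → ℝ) :
    ptr (KN S T) = tr2 T • S + tr2 S • T - comp2 S T - comp2 T S := by
  funext i j
  simp only [ptr, KN, tr2, comp2, Finset.sum_add_distrib, Finset.sum_sub_distrib,
    ← Finset.mul_sum, ← Finset.sum_mul, Pi.add_apply, Pi.sub_apply, Pi.smul_apply, smul_eq_mul]
  rw [Finset.sum_congr rfl fun u _ => mul_comm (S u j) (T i u)]
  ring

lemma comp4_KN_KN (A B C D : Fin n → Fin n → ℝ) :
    comp4 (KN A B) (KN C D) = KN (comp2 A C) (comp2 B D) + KN (comp2 A D) (comp2 B C) := by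
  funext i j k l
  -- the sixteen terms of the summand come in pairs exchanged by `u ↔ v`
  set half : Fin n → Fin n → ℝ := fun u v =>
    A i u * C u k * (B j v * D v l) + A i u * D u k * (B j v * C v l)
      - A i u * C u l * (B j v * D v k) - A i u * D u l * (B j v * C v k)
      + A j u * C u l * (B i v * D v k) + A j u * D u l * (B i v * C v k)
      - A j u * C u k * (B i v * D v l) - A j u * D u k * (B i v * C v l)
  have hsplit : ∀ u v, KN A B i j u v * KN C D u v k l = half u v + half v u := by
    intro u v; simp only [KN, half]; ring
  have hswap : ∑ u, ∑ v, half v u = ∑ u, ∑ v, half u v := Finset.sum_comm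
  have hhalf : ∑ u, ∑ v, half u v =
      (KN (comp2 A C) (comp2 B D) + KN (comp2 A D) (comp2 B C)) i j k l := by
    simp only [half, Pi.add_apply, KN, comp2, Finset.sum_mul_sum, Finset.sum_add_distrib,
      Finset.sum_sub_distrib]
    ring
  simp only [comp4, hsplit, Finset.sum_add_distrib, hswap, hhalf]
  ring

structure IsOrthogonalProjectionPair (g h : Fin n → Fin n → ℝ) : Prop where
  left_symm : ∀ i j, g i j = g j i
  right_symm : ∀ i j, h i j = h j i
  left_idem : comp2 g g = g
  right_idem : comp2 h h = h
  left_right : comp2 g h = 0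
  right_left : comp2 h g = 0

def blockDiag (g h : Fin n → Fin n → ℝ) (x y : ℝ) : Fin n → Fin n → ℝ := x • g + y • h

def blockCurv (g h : Fin n → Fin n → ℝ) (a b c : ℝ) : Fin n → Fin n → Fin n → Fin n → ℝ :=
  a • KN g g + b • KN g h + c • KN h h

variable {g h : Fin n → Fin n → ℝ}

lemma tr2_blockDiag (x y : ℝ) : tr2 (blockDiag g h x y) = x * tr2 g + y * tr2 h := by
  simp only [blockDiag, tr2_add, tr2_smul]

lemma KN_blockDiag (x y x' y' : ℝ) :
    KN (blockDiag g h x y) (blockDiag g h x' y') =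
      blockCurv g h (x * x') (x * y' + y * x') (y * y') := by
  funext i j k l
  simp only [KN, blockDiag, blockCurv, Pi.add_apply, Pi.smul_apply, smul_eq_mul]
  ring

lemma blockCurv_sub (a b c a' b' c' : ℝ) :
    blockCurv g h a b c - blockCurv g h a' b' c' = blockCurv g h (a - a') (b - b') (c - c') := by
  simp only [blockCurv]; module

namespace IsOrthogonalProjectionPair

lemma comp2_blockDiag (hp : IsOrthogonalProjectionPair g h) (x y x' y' : ℝ) :
    comp2 (blockDiag g h x y) (blockDiag g h x' y') = blockDiag g h (x * x') (y * y') := by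
  simp only [blockDiag, comp2_add_left, comp2_add_right, comp2_smul_left, comp2_smul_right,
    hp.left_idem, hp.right_idem, hp.left_right, hp.right_left]
  module

lemma inner2_blockDiag (hp : IsOrthogonalProjectionPair g h) (x y x' y' : ℝ) :
    inner2 (blockDiag g h x y) (blockDiag g h x' y') = x * x' * tr2 g + y * y' * tr2 h := by
  have hsymm : ∀ i j, blockDiag g h x' y' i j = blockDiag g h x' y' j i := by
    intro i j
    simp only [blockDiag, Pi.add_apply, Pi.smul_apply, hp.left_symm i j, hp.right_symm i j]
  rw [inner2_eq_tr2_comp2 hsymm, hp.comp2_blockDiag, tr2_blockDiag]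

lemma ptr_blockCurv (hp : IsOrthogonalProjectionPair g h) (a b c : ℝ) :
    ptr (blockCurv g h a b c) =
      blockDiag g h (2 * a * (tr2 g - 1) + b * tr2 h) (b * tr2 g + 2 * c * (tr2 h - 1)) := by
  simp only [blockCurv, blockDiag, ptr_add, ptr_smul, ptr_KN, hp.left_idem, hp.right_idem,
    hp.left_right, hp.right_left]
  module

lemma comp4_blockCurv (hp : IsOrthogonalProjectionPair g h) (a b c a' b' c' : ℝ) :
    comp4 (blockCurv g h a b c) (blockCurv g h a' b' c') =
      blockCurv g h (2 * a * a') (b * b') (2 * c * c') := by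
  simp only [blockCurv, comp4_add_left, comp4_add_right, comp4_smul_left, comp4_smul_right,
    comp4_KN_KN, hp.left_idem, hp.right_idem, hp.left_right, hp.right_left, KN_zero_left,
    KN_zero_right]
  module

end IsOrthogonalProjectionPair

end BlockAlgebra

section ProductModel

variable {m : ℕ}

lemma isOrthogonalProjectionPair_g6_h6 (m : ℕ) : IsOrthogonalProjectionPair (g6 m) (h6 m) where
  left_symm i j := by simp only [g6]; grind
  right_symm i j := by simp only [h6]; grind
  left_idem := by funext i j; simp [comp2, g6, ite_and]; grind
  right_idem := by funext i j; simp [comp2, h6, ite_and]; grind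
  left_right := by funext i j; simp [comp2, g6, h6, ite_and]; grind
  right_left := by funext i j; simp [comp2, g6, h6, ite_and]; grind

lemma gb6_eq_blockDiag (m : ℕ) : gb6 = blockDiag (g6 m) (h6 m) 1 1 := by
  funext i j
  simp only [gb6, g6, h6, blockDiag, Pi.add_apply, Pi.smul_apply, smul_eq_mul, one_mul]
  split_ifs <;> grind

lemma tr2_g6 (hm : m ≤ 6) : tr2 (g6 m) = m := by
  simp only [tr2, g6, Fin.sum_univ_six]
  interval_cases m <;> norm_num

lemma tr2_h6 (hm : m ≤ 6) : tr2 (h6 m) = 6 - m := by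
  simp only [tr2, h6, Fin.sum_univ_six]
  interval_cases m <;> norm_num

lemma Rm_eq_blockCurv (m : ℕ) (μ ν : ℝ) :
    Rm m μ ν = blockCurv (g6 m) (h6 m) (μ / 2) 0 (ν / 2) := by
  funext i j k l
  simp only [Rm, blockCurv, zero_smul, add_zero, Pi.add_apply, Pi.smul_apply, smul_eq_mul]

lemma ptr_Rm (hm : m ≤ 6) (μ ν : ℝ) :
    ptr (Rm m μ ν) = blockDiag (g6 m) (h6 m) (μ * (m - 1)) (ν * (5 - m)) := by
  rw [Rm_eq_blockCurv, (isOrthogonalProjectionPair_g6_h6 m).ptr_blockCurv, tr2_g6 hm, tr2_h6 hm]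
  congr 1 <;> ring

lemma Pm_eq (m : ℕ) (μ ν : ℝ) : Pm m μ ν = (1 / 4 : ℝ) • (ptr (Rm m μ ν) - Jm m μ ν • gb6) := by
  funext i j
  simp only [Pm, Pi.smul_apply, Pi.sub_apply, smul_eq_mul]
  ring

lemma Em_eq (m : ℕ) (μ ν : ℝ) : Em m μ ν = Pm m μ ν - (Jm m μ ν / 6) • gb6 := rfl

lemma Wm_eq (m : ℕ) (μ ν : ℝ) : Wm m μ ν = Rm m μ ν - KN (Pm m μ ν) gb6 := rfl

end ProductModel

section TorusTimesSphere

lemma Jm_two_zero_one : Jm 2 0 1 = 6 / 5 := by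
  rw [Jm, ptr_Rm (by norm_num), tr2_blockDiag, tr2_g6 (by norm_num), tr2_h6 (by norm_num)]
  norm_num

lemma Pm_two_zero_one : Pm 2 0 1 = blockDiag (g6 2) (h6 2) (-3 / 10) (9 / 20) := by
  rw [Pm_eq, ptr_Rm (by norm_num), Jm_two_zero_one, gb6_eq_blockDiag 2]
  simp only [blockDiag]
  module

lemma Em_two_zero_one : Em 2 0 1 = blockDiag (g6 2) (h6 2) (-1 / 2) (1 / 4) := by
  rw [Em_eq, Pm_two_zero_one, Jm_two_zero_one, gb6_eq_blockDiag 2]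
  simp only [blockDiag]
  module

lemma Wm_two_zero_one : Wm 2 0 1 = blockCurv (g6 2) (h6 2) (3 / 10) (-3 / 20) (1 / 20) := by
  rw [Wm_eq, Rm_eq_blockCurv, Pm_two_zero_one, gb6_eq_blockDiag 2, KN_blockDiag, blockCurv_sub]
  norm_num

lemma ptr_W2m_two_zero_one : ptr (W2m 2 0 1) = blockDiag (g6 2) (h6 2) (9 / 20) (3 / 40) := by
  rw [W2m, Wm_two_zero_one, (isOrthogonalProjectionPair_g6_h6 2).comp4_blockCurv,
    (isOrthogonalProjectionPair_g6_h6 2).ptr_blockCurv, tr2_g6 (by norm_num), tr2_h6 (by norm_num)]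
  norm_num

end TorusTimesSphere

theorem stmt12 : L2m 2 0 1 = -(198 / 25) ∧ L2m 2 0 1 < 0 := by
  have hL : L2m 2 0 1 = -(198 / 25) := by
    rw [L2m, Em_two_zero_one, ptr_W2m_two_zero_one,
      (isOrthogonalProjectionPair_g6_h6 2).inner2_blockDiag, tr2_blockDiag, Jm_two_zero_one,
      tr2_g6 (by norm_num), tr2_h6 (by norm_num)]
    norm_num
  exact ⟨hL, by rw [hL]; norm_num⟩
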